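/- Let A = ℂ[U, U⁻¹] be the Hopf algebra of Laurent polynomials with U grouplike (coordinate algebra of SO(2)≅U(1)), with counit ε(Uᵐ) = 1. Fix t ∈ ℝ \ {-1, 0, 1} and let R ⊆ ker(ε) be the right ideal generated by tU + U⁻¹ - (1+t)·1. Then the quotient ker(ε)/R is one-dimensional, spanned by the class ζ of U - U⁻¹, and the induced right A-module structure satisfies ζ ∘ Uᵐ = t^{-m} ζ for all m ∈ ℤ, where x ∘ a denotes the class of the product of a representative. -/

import Mathlib

open LaurentPolynomial

/-- The counit of `ℂ[U,U⁻¹]` (evaluation at `U = 1`), `ε(Uᵐ) = 1`. -/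
noncomputable def eps : LaurentPolynomial ℂ →ₐ[ℂ] ℂ :=
  AddMonoidAlgebra.lift ℂ ℂ ℤ 1

/-- The element `q = tU + U⁻¹ - (1+t)·1` generating the ideal `R`. -/
noncomputable def qq (t : ℝ) : LaurentPolynomial ℂ :=
  (t : ℂ) • T 1 + T (-1) - (1 + (t : ℂ)) • 1

open Polynomial

/-- Evaluation of a Laurent polynomial at a nonzero complex number. -/
noncomputable def ev (u : ℂ) (hu : u ≠ 0) : LaurentPolynomial ℂ →ₐ[ℂ] ℂ :=
  AddMonoidAlgebra.lift ℂ ℂ ℤ ((Units.coeHom ℂ).comp (zpowersHom ℂˣ (Units.mk0 u hu)))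

lemma ev_T (u : ℂ) (hu : u ≠ 0) (n : ℤ) : ev u hu (T n) = u ^ n := by
  rw [ev, T, AddMonoidAlgebra.lift_single]; simp

lemma eps_T (n : ℤ) : eps (T n) = 1 := by
  rw [eps, T, AddMonoidAlgebra.lift_single]; simp

lemma ev_toLaurent (u : ℂ) (hu : u ≠ 0) (p : ℂ[X]) :
    ev u hu (toLaurent p) = p.eval u := by
  have h : (ev u hu).comp toLaurentAlg = aeval u := by
    apply Polynomial.algHom_ext
    simp [toLaurentAlg_apply, ev_T]
  calc ev u hu (toLaurent p) = ((ev u hu).comp toLaurentAlg) p := rfl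
  _ = aeval u p := by rw [h]
  _ = p.eval u := by rw [Polynomial.coe_aeval_eq_eval]

lemma eps_toLaurent (p : ℂ[X]) : eps (toLaurent p) = p.eval 1 := by
  have h : eps.comp toLaurentAlg = aeval 1 := by
    apply Polynomial.algHom_ext
    simp [toLaurentAlg_apply, eps_T]
  calc eps (toLaurent p) = (eps.comp toLaurentAlg) p := rfl
  _ = aeval 1 p := by rw [h]
  _ = p.eval 1 := by rw [Polynomial.coe_aeval_eq_eval]

lemma qq_mul_T (t : ℝ) (ht : (t:ℂ) ≠ 0) :
    qq t * T 1 = toLaurent (Polynomial.C (t:ℂ) * ((X - 1) * (X - Polynomial.C (t:ℂ)⁻¹))) := by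
  have hc : (Polynomial.C (t:ℂ)) * Polynomial.C (t:ℂ)⁻¹ = 1 := by
    rw [← Polynomial.C_mul, mul_inv_cancel₀ ht, Polynomial.C_1]
  have h : Polynomial.C (t:ℂ) * ((X - 1) * (X - Polynomial.C (t:ℂ)⁻¹))
      = Polynomial.C (t:ℂ) * X^2 - (1 + Polynomial.C (t:ℂ)) * X + 1 := by
    linear_combination (1 - (X:ℂ[X])) * hc
  rw [h]
  simp only [map_add, map_sub, map_mul, map_one, toLaurent_C, toLaurent_X, map_pow]
  rw [qq, Algebra.smul_def, Algebra.smul_def, ← LaurentPolynomial.C_eq_algebraMap,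
    ← LaurentPolynomial.C_eq_algebraMap]
  rw [map_add, map_one]
  have h2 : (T (-1) : ℂ[T;T⁻¹]) * T 1 = 1 := by rw [← T_add]; norm_num
  have h3 : (T 1 : ℂ[T;T⁻¹]) ^ 2 = T (2 : ℤ) := by rw [T_pow]; norm_num
  ring_nf
  rw [mul_comm (T (1:ℤ)) (T (-1:ℤ)), h2, h3]
  ring

/-- The key lemma: a Laurent polynomial vanishing at `1` and at `t⁻¹` lies in the
ideal generated by `qq t`. -/
lemma key (t : ℝ) (ht0 : (t:ℂ) ≠ 0) (ht1 : (t:ℂ) ≠ 1) (y : LaurentPolynomial ℂ)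
    (h1 : eps y = 0) (h2 : ev (t:ℂ)⁻¹ (inv_ne_zero ht0) y = 0) :
    y ∈ Ideal.span {qq t} := by
  set u : ℂ := (t:ℂ)⁻¹ with hu_def
  have hu : u ≠ 0 := inv_ne_zero ht0
  rw [Ideal.mem_span_singleton]
  obtain ⟨n, p, hp⟩ := exists_T_pow y
  have e1 : p.eval 1 = 0 := by rw [← eps_toLaurent, hp, map_mul, h1, zero_mul]
  have e2 : p.eval u = 0 := by rw [← ev_toLaurent u hu, hp, map_mul, h2, zero_mul]
  obtain ⟨p1, hp1⟩ : (X - Polynomial.C 1) ∣ p := dvd_iff_isRoot.2 e1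
  have e3 : p1.eval u = 0 := by
    have hu1 : u - 1 ≠ 0 := by
      intro h
      exact ht1 (inv_eq_one.1 (sub_eq_zero.1 h))
    rw [hp1] at e2
    simp only [eval_mul, eval_sub, eval_X, eval_one, Polynomial.eval_C] at e2
    exact (mul_eq_zero.1 e2).resolve_left hu1
  obtain ⟨p2, hp2⟩ : (X - Polynomial.C u) ∣ p1 := dvd_iff_isRoot.2 e3
  have hc : (Polynomial.C (t:ℂ)) * Polynomial.C u = 1 := by
    rw [← Polynomial.C_mul, mul_inv_cancel₀ ht0, Polynomial.C_1]
  have dQ : (Polynomial.C (t:ℂ) * ((X - 1) * (X - Polynomial.C u))) ∣ p := by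
    refine ⟨Polynomial.C u * p2, ?_⟩
    have : p = (X - Polynomial.C 1) * ((X - Polynomial.C u) * p2) := by rw [← hp2, ← hp1]
    calc p = (Polynomial.C (t:ℂ) * Polynomial.C u) * ((X - 1) * ((X - Polynomial.C u) * p2)) := by
          rw [hc, one_mul]; simpa using this
    _ = Polynomial.C (t:ℂ) * ((X - 1) * (X - Polynomial.C u)) * (Polynomial.C u * p2) := by ring
  have dL : qq t * T 1 ∣ y * T n := by
    rw [qq_mul_T t ht0, ← hu_def, ← hp]
    exact map_dvd (toLaurent : ℂ[X] →+* ℂ[T;T⁻¹]) dQ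
  have d1 : qq t ∣ y * T n := dvd_trans ⟨T 1, rfl⟩ dL
  have d2 : qq t ∣ y * T n * T (-(n:ℤ)) := d1.mul_right _
  rwa [mul_T_assoc, add_neg_cancel, T_zero, mul_one] at d2

/-- For `t ∉ {-1,0,1}` and `R` the ideal generated by `q = tU + U⁻¹ - (1+t)`,
the quotient `ker(ε)/R` is one-dimensional, spanned by the class `ζ` of `U - U⁻¹`,
and the induced right module structure satisfies `ζ ∘ Uᵐ = t^{-m} ζ`, i.e. the
class of `(U^{m+1} - U^{m-1}) - t^{-m}(U - U⁻¹)` vanishes for every `m ∈ ℤ`. -/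
theorem stmt12 (t : ℝ) (ht : t ≠ -1 ∧ t ≠ 0 ∧ t ≠ 1) :
    (∀ m : ℤ, (T (m + 1) - T (m - 1)) - ((t : ℂ) ^ (-m)) • (T 1 - T (-1))
      ∈ Ideal.span {qq t}) ∧
    (∀ x : LaurentPolynomial ℂ, eps x = 0 →
      ∃! c : ℂ, x - c • (T 1 - T (-1)) ∈ Ideal.span {qq t}) := by
  obtain ⟨htm1, ht0', ht1'⟩ := ht
  have ht0 : (t:ℂ) ≠ 0 := by exact_mod_cast Complex.ofReal_ne_zero.2 ht0'
  have ht1 : (t:ℂ) ≠ 1 := by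
    intro h; exact ht1' (by exact_mod_cast h)
  have htn1 : (t:ℂ) ≠ -1 := by
    intro h; exact htm1 (by exact_mod_cast h)
  set u : ℂ := (t:ℂ)⁻¹ with hu_def
  have hu : u ≠ 0 := inv_ne_zero ht0
  have huinv : u⁻¹ = (t:ℂ) := inv_inv _
  have hzne : u - (t:ℂ) ≠ 0 := by
    intro h
    have h' : u = (t:ℂ) := sub_eq_zero.1 h
    have h3 : (t:ℂ)⁻¹ = (t:ℂ) := by rw [← hu_def]; exact h'
    have h2 : (t:ℂ) * t = 1 := by
      calc (t:ℂ) * t = (t:ℂ) * (t:ℂ)⁻¹ := by rw [h3]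
      _ = 1 := mul_inv_cancel₀ ht0
    rcases mul_self_eq_one_iff.1 h2 with h3 | h3
    · exact ht1 h3
    · exact htn1 h3
  have hev_span : ∀ z ∈ Ideal.span {qq t}, ev u hu z = 0 := by
    intro z hz
    obtain ⟨w, hw⟩ := Ideal.mem_span_singleton.1 hz
    have hq0 : ev u hu (qq t) = 0 := by
      rw [qq]
      simp only [map_sub, map_add, map_smul, map_one, ev_T, smul_eq_mul]
      rw [zpow_one, zpow_neg_one, huinv, hu_def, mul_inv_cancel₀ ht0]
      ring
    rw [hw, map_mul, hq0, zero_mul]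
  have hζev : ev u hu (T 1 - T (-1)) = u - (t:ℂ) := by
    rw [map_sub, ev_T, ev_T, zpow_one, zpow_neg_one, huinv]
  have hζeps : eps ((T 1 : ℂ[T;T⁻¹]) - T (-1)) = 0 := by
    rw [map_sub, eps_T, eps_T, sub_self]
  constructor
  · intro m
    apply key t ht0 ht1
    · simp only [map_sub, map_smul, eps_T, smul_eq_mul]
      ring
    · simp only [map_sub, map_smul, ev_T, smul_eq_mul]
      have h4 : (t:ℂ) ^ (-m) = u ^ m := by rw [zpow_neg, inv_zpow]
      rw [h4, zpow_add_one₀ hu, zpow_sub_one₀ hu, zpow_one, zpow_neg_one]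
      ring
  · intro x hx
    refine ⟨ev u hu x / (u - (t:ℂ)), ?_, ?_⟩
    · apply key t ht0 ht1
      · rw [map_sub, map_smul, hx, hζeps, smul_zero, sub_zero]
      · rw [map_sub, map_smul, hζev, smul_eq_mul, div_mul_cancel₀ _ hzne, sub_self]
    · intro c' hc'
      have hmem : x - (ev u hu x / (u - (t:ℂ))) • (T 1 - T (-1)) ∈ Ideal.span {qq t} := by
        apply key t ht0 ht1
        · rw [map_sub, map_smul, hx, hζeps, smul_zero, sub_zero]
        · rw [map_sub, map_smul, hζev, smul_eq_mul, div_mul_cancel₀ _ hzne, sub_self]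
      have hdiff : ((ev u hu x / (u - (t:ℂ))) - c') • ((T 1 : ℂ[T;T⁻¹]) - T (-1))
          ∈ Ideal.span {qq t} := by
        have := Ideal.sub_mem _ hc' hmem
        convert this using 1
        rw [sub_smul]
        ring
      have h0 : ((ev u hu x / (u - (t:ℂ))) - c') * (u - (t:ℂ)) = 0 := by
        have := hev_span _ hdiff
        rwa [map_smul, hζev, smul_eq_mul] at this
      rcases mul_eq_zero.1 h0 with h | h
      · linear_combination -h
      · exact absurd h hzne
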